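/- arXiv:1109.5558 — 3 statements merged into one kernel-verified Lean document; each statement's English description precedes it below -/
import Mathlib

section
/- Fix an integer k ≥ 1 and for i, j, m ∈ {0,...,k} define the fusion coefficient N_{ij}^m to be 1 if m ≡ i+j (mod 2) and |i−j| ≤ m ≤ min(i+j, 2k−i−j), and 0 otherwise. Then for all i, j, l, m ∈ {0,...,k}: ∑_{s=0}^{k} N_{ij}^s · N_{sl}^m = ∑_{s=0}^{k} N_{jl}^s · N_{is}^m. -/
/-!
`N_{ij}^m` is symmetric in `i, j, m`, so both sides have the form `∑ₛ N_{ab}^s N_{cd}^s`.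
Such a product is the indicator of `s ≡ a + b (mod 2)` lying in the window
`[max(|a-b|, |c-d|), min(a+b, c+d, 2k-a-b, 2k-c-d)]`, whose end points have the parity of
`a + b` when `a + b + c + d` is even; so the sum is half the width of the window, plus one
(or `0` if the window is empty).
The width is symmetric in the four labels: it is twice the minimum of `x`, `σ - x`, `k - x`,
`k - σ + x` over the labels `x`, where `2σ = a + b + c + d`.
-/

/-- The `sl(2)` level-`k` Verlinde fusion coefficient `N_{ij}^m`:
`1` if `m ≡ i+j (mod 2)` and `|i−j| ≤ m ≤ min(i+j, 2k−i−j)`, else `0`. -/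
def fusionN (k i j m : ℕ) : ℕ :=
  if m % 2 = (i + j) % 2 ∧ i ≤ j + m ∧ j ≤ i + m ∧ m ≤ i + j ∧ i + j + m ≤ 2 * k
  then 1 else 0

open Finset

namespace Fusion

theorem fusionN_comm (k i j m : ℕ) : fusionN k i j m = fusionN k j i m := by
  unfold fusionN
  split_ifs <;> omega

theorem fusionN_swap (k i j m : ℕ) : fusionN k i j m = fusionN k i m j := by
  unfold fusionN
  split_ifs <;> omega

def channelLow (a b c d : ℕ) : ℕ := max (max (a - b) (b - a)) (max (c - d) (d - c))

def channelHigh (k a b c d : ℕ) : ℕ :=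
  min (min (a + b) (c + d)) (min (2 * k - (a + b)) (2 * k - (c + d)))

theorem channelLow_le_iff {a b c d s : ℕ} :
    channelLow a b c d ≤ s ↔ a ≤ b + s ∧ b ≤ a + s ∧ c ≤ d + s ∧ d ≤ c + s := by
  simp only [channelLow, max_le_iff]
  omega

theorem le_channelHigh_iff {k a b c d s : ℕ} (hab : a + b ≤ 2 * k) (hcd : c + d ≤ 2 * k) :
    s ≤ channelHigh k a b c d ↔
      s ≤ a + b ∧ s ≤ c + d ∧ a + b + s ≤ 2 * k ∧ c + d + s ≤ 2 * k := by
  simp only [channelHigh, le_min_iff]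
  omega

theorem channelLow_cases (a b c d : ℕ) :
    channelLow a b c d = a - b ∨ channelLow a b c d = b - a ∨
      channelLow a b c d = c - d ∨ channelLow a b c d = d - c := by
  unfold channelLow
  rcases max_choice (max (a - b) (b - a)) (max (c - d) (d - c)) with h | h <;> rw [h]
  · rcases max_choice (a - b) (b - a) with h | h <;> simp [h]
  · rcases max_choice (c - d) (d - c) with h | h <;> simp [h]

theorem channelHigh_cases (k a b c d : ℕ) :
    channelHigh k a b c d = a + b ∨ channelHigh k a b c d = c + d ∨
      channelHigh k a b c d = 2 * k - (a + b) ∨ channelHigh k a b c d = 2 * k - (c + d) := by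
  unfold channelHigh
  rcases min_choice (min (a + b) (c + d)) (min (2 * k - (a + b)) (2 * k - (c + d))) with h | h <;>
    rw [h]
  · rcases min_choice (a + b) (c + d) with h | h <;> simp [h]
  · rcases min_choice (2 * k - (a + b)) (2 * k - (c + d)) with h | h <;> simp [h]

theorem channelLow_mod_two {a b c d : ℕ} (heven : (a + b + c + d) % 2 = 0) :
    channelLow a b c d % 2 = (a + b) % 2 := by
  have := channelLow_le_iff.1 (le_refl (channelLow a b c d))
  rcases channelLow_cases a b c d with h | h | h | h <;> omega

theorem channelHigh_le {k a b c d : ℕ} (hab : a + b ≤ 2 * k) : channelHigh k a b c d ≤ k := by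
  unfold channelHigh
  omega

theorem channelHigh_add_channelLow {k a b c d : ℕ} (hab : a + b ≤ 2 * k) (hcd : c + d ≤ 2 * k)
    (hbc : b + c ≤ 2 * k) (had : a + d ≤ 2 * k) :
    channelHigh k a b c d + channelLow b c a d = channelLow a b c d + channelHigh k b c a d := by
  have hL₁ := channelLow_le_iff.1 (le_refl (channelLow a b c d))
  have hL₂ := channelLow_le_iff.1 (le_refl (channelLow b c a d))
  have hH₁ := (le_channelHigh_iff hab hcd).1 (le_refl (channelHigh k a b c d))
  have hH₂ := (le_channelHigh_iff hbc had).1 (le_refl (channelHigh k b c a d))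
  apply le_antisymm
  · rcases channelLow_cases b c a d with h | h | h | h <;>
      rcases channelHigh_cases k b c a d with h' | h' | h' | h' <;> omega
  · rcases channelLow_cases a b c d with h | h | h | h <;>
      rcases channelHigh_cases k a b c d with h' | h' | h' | h' <;> omega

theorem fusionN_mul_fusionN {k a b c d : ℕ} (hab : a + b ≤ 2 * k) (hcd : c + d ≤ 2 * k)
    (heven : (a + b + c + d) % 2 = 0) (s : ℕ) :
    fusionN k a b s * fusionN k c d s =
      if s % 2 = channelLow a b c d % 2 ∧ channelLow a b c d ≤ s ∧ s ≤ channelHigh k a b c d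
      then 1 else 0 := by
  simp only [channelLow_mod_two heven, channelLow_le_iff, le_channelHigh_iff hab hcd]
  unfold fusionN
  split_ifs <;> omega

theorem sum_range_ite_mod_two_eq_and_mem_Icc (n a b : ℕ) :
    ∑ s ∈ range n, (if s % 2 = a % 2 ∧ a ≤ s ∧ s ≤ b then 1 else 0) =
      (min n (b + 1) + 1 - a) / 2 := by
  induction n with
  | zero => simp only [sum_range_zero]; omega
  | succ n ih =>
    rw [sum_range_succ, ih]
    split_ifs <;> omega

theorem sum_fusionN_mul_fusionN {k a b c d : ℕ} (hab : a + b ≤ 2 * k) (hcd : c + d ≤ 2 * k) :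
    ∑ s ∈ range (k + 1), fusionN k a b s * fusionN k c d s =
      if (a + b + c + d) % 2 = 0 then (channelHigh k a b c d + 2 - channelLow a b c d) / 2
      else 0 := by
  split_ifs with heven
  · simp only [fusionN_mul_fusionN hab hcd heven, sum_range_ite_mod_two_eq_and_mem_Icc]
    have := channelHigh_le (c := c) (d := d) hab
    omega
  · refine sum_eq_zero fun s _ => ?_
    unfold fusionN
    split_ifs <;> omega

end Fusion

open Fusion in
theorem stmt_2_general (k : ℕ) (i j l m : ℕ)
    (hi : i ≤ k) (hj : j ≤ k) (hl : l ≤ k) (hm : m ≤ k) :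
    ∑ s ∈ Finset.range (k + 1), fusionN k i j s * fusionN k s l m
      = ∑ s ∈ Finset.range (k + 1), fusionN k j l s * fusionN k i s m := by
  have hL (s : ℕ) : fusionN k s l m = fusionN k l m s := by rw [fusionN_comm, fusionN_swap]
  have hR (s : ℕ) : fusionN k i s m = fusionN k i m s := fusionN_swap k i s m
  simp only [hL, hR]
  rw [sum_fusionN_mul_fusionN (by omega) (by omega), sum_fusionN_mul_fusionN (by omega) (by omega)]
  have := channelHigh_add_channelLow (k := k) (a := i) (b := j) (c := l) (d := m)
    (by omega) (by omega) (by omega) (by omega)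
  split_ifs <;> omega

/-- Associativity of the level-`k` `sl(2)` fusion ring. -/
theorem stmt_2 (k : ℕ) (hk : 1 ≤ k) (i j l m : ℕ)
    (hi : i ≤ k) (hj : j ≤ k) (hl : l ≤ k) (hm : m ≤ k) :
    ∑ s ∈ Finset.range (k + 1), fusionN k i j s * fusionN k s l m
      = ∑ s ∈ Finset.range (k + 1), fusionN k j l s * fusionN k i s m :=
  stmt_2_general k i j l m hi hj hl hm
end

section
/- Let k ≥ 1 be an integer, θ = π/(k+2), and set d_j = sin((j+1)θ) for j ∈ ℤ. Then for all i, j ∈ {0,...,k} with i+j ≤ k: d_i · d_j = sin(θ) · ∑_{s=0}^{min(i,j)} d_{i+j−2s}; and for i+j ≥ k: d_i · d_j = sin(θ) · ∑_{s=i+j−k}^{min(i,j)} d_{i+j−2s}. -/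
/-!
Writing `θ = π/(k+2)`, the product-to-sum formula turns each summand into a difference of
cosines, `2 sin θ sin((m+1)θ) = cos(mθ) - cos((m+2)θ)`, so both sums telescope, as does
`2 d_i d_j = cos((i-j)θ) - cos((i+j+2)θ)`. In the truncated sum the bottom boundary term
`cos((2k+2-i-j)θ)` equals `cos((i+j+2)θ)` because the two angles add up to `2π`.
-/

open Real Finset

theorem sin_mul_sum_Ico_sin_sub_two_mul (θ x : ℝ) {a b : ℕ} (hab : a ≤ b) :
    sin θ * ∑ s ∈ Ico a b, sin ((x - 2 * s + 1) * θ)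
      = (cos ((x - 2 * b + 2) * θ) - cos ((x - 2 * a + 2) * θ)) / 2 := by
  induction b, hab using Nat.le_induction with
  | base => simp
  | succ b hab ih =>
    have hterm := two_mul_sin_mul_sin θ ((x - 2 * b + 1) * θ)
    rw [sum_Ico_succ_top hab, mul_add, ih]
    push_cast
    rw [show (x - 2 * b + 2) * θ = θ + (x - 2 * b + 1) * θ by ring,
      show (x - 2 * (b + 1) + 2) * θ = -(θ - (x - 2 * b + 1) * θ) by ring, cos_neg]
    linarith

theorem sum_Ico_sin_natCast_sub (θ : ℝ) {n a b : ℕ} (hb : 2 * b ≤ n + 2) :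
    ∑ s ∈ Ico a b, sin (((n - 2 * s : ℕ) + 1 : ℝ) * θ)
      = ∑ s ∈ Ico a b, sin (((n : ℝ) - 2 * s + 1) * θ) := by
  refine sum_congr rfl fun s hs => ?_
  rw [Nat.cast_sub (by grind), Nat.cast_mul, Nat.cast_ofNat]

theorem stmt_4_general (k : ℕ) (i j : ℕ) (hi : i ≤ k) (hj : j ≤ k) :
    (i + j ≤ k →
      Real.sin (((i : ℝ) + 1) * (Real.pi / ((k : ℝ) + 2))) *
        Real.sin (((j : ℝ) + 1) * (Real.pi / ((k : ℝ) + 2)))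
      = Real.sin (Real.pi / ((k : ℝ) + 2)) *
        ∑ s ∈ Finset.range (min i j + 1),
          Real.sin (((i + j - 2 * s : ℕ) + 1 : ℝ) * (Real.pi / ((k : ℝ) + 2)))) ∧
    (k ≤ i + j →
      Real.sin (((i : ℝ) + 1) * (Real.pi / ((k : ℝ) + 2))) *
        Real.sin (((j : ℝ) + 1) * (Real.pi / ((k : ℝ) + 2)))
      = Real.sin (Real.pi / ((k : ℝ) + 2)) *
        ∑ s ∈ Finset.Icc (i + j - k) (min i j),
          Real.sin (((i + j - 2 * s : ℕ) + 1 : ℝ) * (Real.pi / ((k : ℝ) + 2)))) := by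
  set θ := π / ((k : ℝ) + 2) with hθ
  have hprod : sin ((i + 1) * θ) * sin ((j + 1) * θ)
      = (cos ((i - j) * θ) - cos ((i + j + 2) * θ)) / 2 := by
    rw [eq_div_iff two_ne_zero, mul_comm, ← mul_assoc, two_mul_sin_mul_sin]
    ring_nf
  have hmin : cos ((((i + j : ℕ) : ℝ) - 2 * ((min i j + 1 : ℕ) : ℝ) + 2) * θ)
      = cos ((i - j) * θ) := by
    rcases le_total i j with h | h
    · rw [min_eq_left h, ← cos_neg]
      push_cast
      ring_nf
    · rw [min_eq_right h]
      push_cast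
      ring_nf
  have hbound : 2 * (min i j + 1) ≤ i + j + 2 := by omega
  refine ⟨fun _ => ?_, fun hij => ?_⟩
  · rw [range_eq_Ico, sum_Ico_sin_natCast_sub θ hbound,
      sin_mul_sum_Ico_sin_sub_two_mul _ _ (Nat.zero_le _), hprod, hmin]
    push_cast
    ring_nf
  · have hreflect : cos ((((i + j : ℕ) : ℝ) - 2 * ((i + j - k : ℕ) : ℝ) + 2) * θ)
        = cos ((i + j + 2) * θ) := by
      have hkθ : ((k : ℝ) + 2) * θ = π := by rw [hθ]; field_simp
      rw [Nat.cast_sub hij, ← cos_two_pi_sub, ← hkθ]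
      push_cast
      ring_nf
    rw [← Ico_add_one_right_eq_Icc, sum_Ico_sin_natCast_sub θ hbound,
      sin_mul_sum_Ico_sin_sub_two_mul _ _ (by omega), hprod, hmin, hreflect]

/-- `d_j = sin((j+1)π/(k+2))` satisfies the level-`k` `sl(2)` fusion-rule
product formula. -/
theorem stmt_4 (k : ℕ) (hk : 1 ≤ k) (i j : ℕ) (hi : i ≤ k) (hj : j ≤ k) :
    (i + j ≤ k →
      Real.sin (((i : ℝ) + 1) * (Real.pi / ((k : ℝ) + 2))) *
        Real.sin (((j : ℝ) + 1) * (Real.pi / ((k : ℝ) + 2)))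
      = Real.sin (Real.pi / ((k : ℝ) + 2)) *
        ∑ s ∈ Finset.range (min i j + 1),
          Real.sin (((i + j - 2 * s : ℕ) + 1 : ℝ) * (Real.pi / ((k : ℝ) + 2)))) ∧
    (k ≤ i + j →
      Real.sin (((i : ℝ) + 1) * (Real.pi / ((k : ℝ) + 2))) *
        Real.sin (((j : ℝ) + 1) * (Real.pi / ((k : ℝ) + 2)))
      = Real.sin (Real.pi / ((k : ℝ) + 2)) *
        ∑ s ∈ Finset.Icc (i + j - k) (min i j),
          Real.sin (((i + j - 2 * s : ℕ) + 1 : ℝ) * (Real.pi / ((k : ℝ) + 2)))) :=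
  stmt_4_general k i j hi hj
end

section
/- Let A be a finite abelian group with a quadratic form q : A → ℂˣ (i.e., q(−x) = q(x) and b(x,y) := q(x+y)q(x)⁻¹q(y)⁻¹ is biadditive). Suppose the radical R = {x ∈ A : b(x,y) = 1 for all y ∈ A} equals {0, u} where u has order 2 and q(u) = −1. Then there exists a subgroup B ≤ A with A = B ⊕ ⟨u⟩ (internal direct sum) such that the restriction of b to B is non-degenerate. -/
/-!
Since `u` lies in the radical, `q(2x) = b(x,x) q(x)² = q(x)⁴ = b(x,2x)` equals `1` whenever
`2x = u`; as `q(u) = -1`, the element `u` is therefore not divisible by `2`. Its image in the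
`𝔽₂`-vector space `A / 2A` is then nonzero, so some character `g : A → ℤ/2` has `g(u) = 1`, and
`B = ker g` is a complement of `⟨u⟩ = {0, u}`. An element of `B` orthogonal to `B` is also
orthogonal to `u`, hence to `B + ⟨u⟩ = A`, so it lies in the radical `{0, u}`, and `u ∉ B`.
-/

section AddCommGroup

variable {A : Type*} [AddCommGroup A]

theorem exists_addMonoidHom_zmod_two_apply_eq_one {u : A} (hu : ∀ x : A, 2 • x ≠ u) :
    ∃ g : A →+ ZMod 2, g u = 1 := by
  let H := (nsmulAddMonoidHom 2 : A →+ A).range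
  let _ : Module (ZMod 2) (A ⧸ H) := QuotientAddGroup.zmodModule fun x => ⟨x, rfl⟩
  have hu_ne : (QuotientAddGroup.mk' H u) ≠ 0 := by
    rw [QuotientAddGroup.mk'_apply, ne_eq, QuotientAddGroup.eq_zero_iff]
    rintro ⟨x, hx⟩
    exact hu x hx
  obtain ⟨f, hf⟩ : ∃ f : Module.Dual (ZMod 2) (A ⧸ H), f (QuotientAddGroup.mk' H u) ≠ 0 := by
    by_contra! h
    exact hu_ne ((Module.forall_dual_apply_eq_zero_iff (ZMod 2) _).mp h)
  have h_ne_zero : ∀ a : ZMod 2, a ≠ 0 → a = 1 := by decide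
  exact ⟨f.toAddMonoidHom.comp (QuotientAddGroup.mk' H), h_ne_zero _ hf⟩

theorem AddMonoidHom.mem_ker_or_sub_mem_ker {g : A →+ ZMod 2} {u : A} (hgu : g u = 1) (y : A) :
    y ∈ g.ker ∨ y - u ∈ g.ker := by
  simp only [AddMonoidHom.mem_ker, map_sub, hgu]
  generalize g y = a
  revert a
  decide

theorem AddMonoidHom.isCompl_ker_zmultiples {g : A →+ ZMod 2} {u : A} (hu2 : u + u = 0)
    (hgu : g u = 1) : IsCompl g.ker (AddSubgroup.zmultiples u) := by
  constructor
  · rw [AddSubgroup.disjoint_def]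
    rintro x hx ⟨n, rfl⟩
    have h2n : (2 : ℤ) ∣ n :=
      mod_cast (ZMod.intCast_zmod_eq_zero_iff_dvd n 2).mp (by simpa [hgu] using hx)
    obtain ⟨k, rfl⟩ := h2n
    show (2 * k) • u = 0
    rw [mul_zsmul, two_zsmul, ← zsmul_add, hu2, zsmul_zero]
  · rw [codisjoint_iff, eq_top_iff]
    intro y _
    rcases g.mem_ker_or_sub_mem_ker hgu y with hy | hy
    · exact AddSubgroup.mem_sup_left hy
    · rw [← sub_add_cancel y u]
      exact add_mem (AddSubgroup.mem_sup_left hy)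
        (AddSubgroup.mem_sup_right (AddSubgroup.mem_zmultiples u))

end AddCommGroup

section QuadraticForm

variable {A M : Type*} [AddCommGroup A] [CommGroup M] {q : A → M} {b : A → A → M}

theorem bilin_eq_one_of_forall_mem_ker (hadd2 : ∀ x y y' : A, b x (y + y') = b x y * b x y')
    {g : A →+ ZMod 2} {u x : A} (hgu : g u = 1) (hxu : b x u = 1)
    (hx : ∀ y ∈ g.ker, b x y = 1) (y : A) : b x y = 1 := by
  rcases g.mem_ker_or_sub_mem_ker hgu y with hy | hy
  · exact hx y hy
  · rw [← sub_add_cancel y u, hadd2, hx _ hy, hxu, one_mul]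

theorem bilin_comm (hb : ∀ x y : A, b x y = q (x + y) * (q x)⁻¹ * (q y)⁻¹) (x y : A) :
    b x y = b y x := by
  rw [hb, hb, add_comm, mul_right_comm]

theorem bilin_zero_right (hadd2 : ∀ x y y' : A, b x (y + y') = b x y * b x y') (x : A) :
    b x 0 = 1 := by
  simpa using hadd2 x 0 0

theorem bilin_self (hq : ∀ x : A, q (-x) = q x)
    (hb : ∀ x y : A, b x y = q (x + y) * (q x)⁻¹ * (q y)⁻¹)
    (hadd2 : ∀ x y y' : A, b x (y + y') = b x y * b x y') (x : A) : b x x = q x ^ 2 := by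
  have hq0 : q 0 = 1 := by simpa [bilin_zero_right hadd2] using hb 0 0
  have hneg : b x x * b x (-x) = 1 := by rw [← hadd2, add_neg_cancel, bilin_zero_right hadd2]
  rw [hb x (-x), add_neg_cancel, hq0, hq] at hneg
  rw [← mul_inv_eq_one, ← hneg]
  group

theorem two_nsmul_ne_of_forall_bilin_eq_one (hq : ∀ x : A, q (-x) = q x)
    (hb : ∀ x y : A, b x y = q (x + y) * (q x)⁻¹ * (q y)⁻¹)
    (hadd2 : ∀ x y y' : A, b x (y + y') = b x y * b x y') {u : A} (hqu : q u ≠ 1)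
    (hrad : ∀ x, b x u = 1) (x : A) : 2 • x ≠ u := by
  intro hx
  rw [two_nsmul] at hx
  have hqu_eq : q u = q x ^ 4 := by
    have h := hb x x
    rw [hx, bilin_self hq hb hadd2, eq_mul_inv_iff_mul_eq, eq_mul_inv_iff_mul_eq] at h
    rw [← h]
    group
  have hbxu : b x u = q x ^ 4 := by
    rw [← hx, hadd2, bilin_self hq hb hadd2]
    group
  exact hqu (hqu_eq.trans (hbxu.symm.trans (hrad x)))

end QuadraticForm

theorem stmt_17_general {A : Type*} [AddCommGroup A]
    (q : A → ℂˣ) (hq : ∀ x : A, q (-x) = q x)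
    (b : A → A → ℂˣ) (hb : ∀ x y : A, b x y = q (x + y) * (q x)⁻¹ * (q y)⁻¹)
    (hadd2 : ∀ x y y' : A, b x (y + y') = b x y * b x y')
    (u : A) (hu2 : u + u = 0) (hqu : (q u : ℂ) = -1)
    (hrad : ∀ x : A, (∀ y : A, b x y = 1) ↔ (x = 0 ∨ x = u)) :
    ∃ B : AddSubgroup A, IsCompl B (AddSubgroup.zmultiples u) ∧
      ∀ x ∈ B, (∀ y ∈ B, b x y = 1) → x = 0 := by
  have hqu_ne : q u ≠ 1 := fun h => by norm_num [h] at hqu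
  have hbu (x : A) : b x u = 1 := (bilin_comm hb x u).trans ((hrad u).2 (Or.inr rfl) x)
  obtain ⟨g, hgu⟩ := exists_addMonoidHom_zmod_two_apply_eq_one
    (two_nsmul_ne_of_forall_bilin_eq_one hq hb hadd2 hqu_ne hbu)
  refine ⟨g.ker, g.isCompl_ker_zmultiples hu2 hgu, fun x hxB hx => ?_⟩
  refine ((hrad x).1 (bilin_eq_one_of_forall_mem_ker hadd2 hgu (hbu x) hx)).resolve_right ?_
  rintro rfl
  simp [AddMonoidHom.mem_ker, hgu] at hxB

/-- If the radical of a quadratic form `q` on a finite abelian group `A` is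
`{0, u}` with `u` of order `2` and `q(u) = −1`, then `A = B ⊕ ⟨u⟩` with the
associated bicharacter non-degenerate on `B`. -/
theorem stmt_17 {A : Type*} [AddCommGroup A] [Finite A]
    (q : A → ℂˣ) (hq : ∀ x : A, q (-x) = q x)
    (b : A → A → ℂˣ) (hb : ∀ x y : A, b x y = q (x + y) * (q x)⁻¹ * (q y)⁻¹)
    (hadd1 : ∀ x x' y : A, b (x + x') y = b x y * b x' y)
    (hadd2 : ∀ x y y' : A, b x (y + y') = b x y * b x y')
    (u : A) (hu0 : u ≠ 0) (hu2 : u + u = 0) (hqu : (q u : ℂ) = -1)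
    (hrad : ∀ x : A, (∀ y : A, b x y = 1) ↔ (x = 0 ∨ x = u)) :
    ∃ B : AddSubgroup A, IsCompl B (AddSubgroup.zmultiples u) ∧
      ∀ x ∈ B, (∀ y ∈ B, b x y = 1) → x = 0 :=
  stmt_17_general q hq b hb hadd2 u hu2 hqu hrad
end
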